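/- The symmetry identity M S = Sᵀ M = Sᵀ M S holds; in particular Sᵀ M S is symmetric. -/

import Mathlib

/-!
Since `P` is idempotent, `M_c P = P M P = P M_c`, so `Q := M_c⁻¹ P` is symmetric and satisfies
`Q M Q = Q`. Then `S = 1 - Q M` has `Sᵀ = 1 - M Q`, so `M S = M - M Q M = Sᵀ M`, and
`Sᵀ M S = M - 2 M Q M + M (Q M Q) M = Sᵀ M`.
-/

open Matrix

section Idempotent

variable {R A : Type*} [CommRing R] [Ring A] [Algebra R A] {p : A}

theorem IsIdempotentElem.mul_mul_add_smul_one_sub_mul (hp : IsIdempotentElem p) (m : A) (ν : R) :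
    (p * m * p + ν • (1 - p)) * p = p * m * p := by
  rw [add_mul, smul_mul_assoc, sub_mul, one_mul, hp.eq, sub_self, smul_zero, add_zero,
    mul_assoc, hp.eq]

theorem IsIdempotentElem.mul_mul_mul_add_smul_one_sub (hp : IsIdempotentElem p) (m : A) (ν : R) :
    p * (p * m * p + ν • (1 - p)) = p * m * p := by
  rw [mul_add, mul_smul_comm, mul_sub, mul_one, hp.eq, sub_self, smul_zero, add_zero,
    ← mul_assoc, ← mul_assoc, hp.eq]

theorem IsIdempotentElem.commute_mul_mul_add_smul_one_sub (hp : IsIdempotentElem p) (m : A)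
    (ν : R) : Commute (p * m * p + ν • (1 - p)) p :=
  (hp.mul_mul_add_smul_one_sub_mul m ν).trans (hp.mul_mul_mul_add_smul_one_sub m ν).symm

end Idempotent

namespace Matrix

variable {n R : Type*} [Fintype n] [DecidableEq n] [CommRing R]

theorem nonsing_inv_mul_mul_nonsing_inv (A : Matrix n n R) : A⁻¹ * A * A⁻¹ = A⁻¹ := by
  by_cases h : IsUnit A.det
  · rw [nonsing_inv_mul A h, Matrix.one_mul]
  · simp [nonsing_inv_apply_not_isUnit A h]

theorem commute_nonsing_inv_left {A B : Matrix n n R} (h : Commute A B) : Commute A⁻¹ B := by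
  by_cases hA : IsUnit A.det
  · calc A⁻¹ * B = A⁻¹ * (B * A) * A⁻¹ := by
          rw [Matrix.mul_assoc, Matrix.mul_assoc, mul_nonsing_inv A hA, Matrix.mul_one]
      _ = B * A⁻¹ := by rw [← h.eq, ← Matrix.mul_assoc, nonsing_inv_mul A hA, Matrix.one_mul]
  · simp [Commute, SemiconjBy, nonsing_inv_apply_not_isUnit A hA]

variable {A M P Q : Matrix n n R}

theorem transpose_one_sub_mul (hM : Mᵀ = M) (hQ : Qᵀ = Q) : (1 - Q * M)ᵀ = 1 - M * Q := by
  rw [transpose_sub, transpose_one, transpose_mul, hM, hQ]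

theorem mul_one_sub_mul_eq_transpose_mul (hM : Mᵀ = M) (hQ : Qᵀ = Q) :
    M * (1 - Q * M) = (1 - Q * M)ᵀ * M := by
  rw [transpose_one_sub_mul hM hQ]
  noncomm_ring

theorem transpose_mul_mul_one_sub_mul (hM : Mᵀ = M) (hQ : Qᵀ = Q) (hQMQ : Q * M * Q = Q) :
    (1 - Q * M)ᵀ * M * (1 - Q * M) = (1 - Q * M)ᵀ * M := by
  rw [transpose_one_sub_mul hM hQ]
  calc (1 - M * Q) * M * (1 - Q * M) = M - M * Q * M - M * Q * M + M * (Q * M * Q) * M := by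
        noncomm_ring
    _ = (1 - M * Q) * M := by rw [hQMQ]; noncomm_ring

theorem transpose_nonsing_inv_mul_of_commute (hA : Aᵀ = A) (hP : Pᵀ = P) (hAP : Commute A P) :
    (A⁻¹ * P)ᵀ = A⁻¹ * P := by
  rw [transpose_mul, transpose_nonsing_inv, hA, hP, (commute_nonsing_inv_left hAP).eq]

theorem nonsing_inv_mul_mul_mul_nonsing_inv_mul (hAP : Commute A P) (hAPM : A * P = P * M * P) :
    A⁻¹ * P * M * (A⁻¹ * P) = A⁻¹ * P := by
  have hc : A⁻¹ * P = P * A⁻¹ := (commute_nonsing_inv_left hAP).eq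
  calc A⁻¹ * P * M * (A⁻¹ * P) = A⁻¹ * (P * M * P) * A⁻¹ := by
        nth_rw 2 [hc]; simp only [Matrix.mul_assoc]
    _ = A⁻¹ * A * A⁻¹ * P := by rw [← hAPM]; simp only [Matrix.mul_assoc, ← hc]
    _ = A⁻¹ * P := by rw [nonsing_inv_mul_mul_nonsing_inv]

end Matrix

theorem MS_symmetry_general {n : ℕ}
    (M P : Matrix (Fin n) (Fin n) ℝ) (hM : M.PosDef)
    (hP : P * P = P) (hPt : Pᵀ = P) (ν : ℝ)
    (Mc S : Matrix (Fin n) (Fin n) ℝ)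
    (hMc : Mc = P * M * P + ν • (1 - P)) (hS : S = 1 - Mc⁻¹ * P * M) :
    M * S = Sᵀ * M ∧ Sᵀ * M = Sᵀ * M * S ∧ (Sᵀ * M * S)ᵀ = Sᵀ * M * S := by
  have hMt : Mᵀ = M := hM.isHermitian
  have hMcP : Mc * P = P * M * P := hMc ▸ IsIdempotentElem.mul_mul_add_smul_one_sub_mul hP M ν
  have hcomm : Commute Mc P := hMc ▸ IsIdempotentElem.commute_mul_mul_add_smul_one_sub hP M ν
  have hMct : Mcᵀ = Mc := by
    rw [hMc]
    simp only [transpose_add, transpose_smul, transpose_sub, transpose_one, transpose_mul, hMt,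
      hPt, Matrix.mul_assoc]
  have hQt : (Mc⁻¹ * P)ᵀ = Mc⁻¹ * P := transpose_nonsing_inv_mul_of_commute hMct hPt hcomm
  have hQMQ := nonsing_inv_mul_mul_mul_nonsing_inv_mul hcomm hMcP
  subst hS
  refine ⟨mul_one_sub_mul_eq_transpose_mul hMt hQt,
    (transpose_mul_mul_one_sub_mul hMt hQt hQMQ).symm, ?_⟩
  simp only [transpose_mul, transpose_transpose, hMt, Matrix.mul_assoc]

theorem MS_symmetry {n : ℕ}
    (M P : Matrix (Fin n) (Fin n) ℝ) (hM : M.PosDef)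
    (hP : P * P = P) (hPt : Pᵀ = P) (ν : ℝ) (hν : 0 < ν)
    (Mc S : Matrix (Fin n) (Fin n) ℝ)
    (hMc : Mc = P * M * P + ν • (1 - P)) (hS : S = 1 - Mc⁻¹ * P * M) :
    M * S = Sᵀ * M ∧ Sᵀ * M = Sᵀ * M * S ∧ (Sᵀ * M * S)ᵀ = Sᵀ * M * S :=
  MS_symmetry_general M P hM hP hPt ν Mc S hMc hS
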